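/- arXiv:1910.11816 — 3 statements merged into one kernel-verified Lean document; each statement's English description precedes it below -/
import Mathlib

section
/- Let X be a finite set and let A be an abelian subgroup of Sym(X) that is the automorphism group of some k-coloured graph on X (A ∈ GR). Then A is 2-orbit-closed, and for every orbit O of A, if the factor group A_O/A_O^* is an elementary abelian 2-group, then A_O is an elementary abelian 2-group (i.e., a(a(x)) = x for all a ∈ A and x ∈ O). -/
/-- The orbit of a point `x` under a set `G` of permutations of `X`. -/
def orbitOf {X : Type*} (G : Set (Equiv.Perm X)) (x : X) : Set X :=
  {y | ∃ a ∈ G, a x = y}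

/-- A permutation `σ` is 2-orbit-compatible with `G` if for every pair of orbits
`O` and `Q` of `G` there is an element of `G` agreeing with `σ` on `O ∪ Q`. -/
def TwoOrbitCompatible {X : Type*} (G : Set (Equiv.Perm X)) (σ : Equiv.Perm X) : Prop :=
  ∀ x y : X, ∃ a ∈ G, ∀ z ∈ orbitOf G x ∪ orbitOf G y, σ z = a z

/-- A subgroup `A ≤ Sym(X)` is 2-orbit-closed if every permutation that is
2-orbit-compatible with `A` belongs to `A`. -/
def TwoOrbitClosed {X : Type*} (A : Subgroup (Equiv.Perm X)) : Prop :=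
  ∀ σ : Equiv.Perm X, TwoOrbitCompatible (A : Set (Equiv.Perm X)) σ → σ ∈ A

/-- `A` is precisely the automorphism group of the `k`-coloured graph `γ` on `X`. -/
def IsColGraphAutGroup {X : Type*} {k : ℕ} (γ : Sym2 X → Fin k)
    (A : Subgroup (Equiv.Perm X)) : Prop :=
  ∀ σ : Equiv.Perm X, σ ∈ A ↔ ∀ x y : X, x ≠ y → γ s(σ x, σ y) = γ s(x, y)

/-- `A ∈ GR`: `A` is the automorphism group of some coloured graph on `X`. -/
def InGR {X : Type*} (A : Subgroup (Equiv.Perm X)) : Prop :=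
  ∃ k : ℕ, 1 ≤ k ∧ ∃ γ : Sym2 X → Fin k, IsColGraphAutGroup γ A

/-- `A ∈ GR(4)`: `A` is the automorphism group of some 4-coloured graph on `X`. -/
def InGR4 {X : Type*} (A : Subgroup (Equiv.Perm X)) : Prop :=
  ∃ γ : Sym2 X → Fin 4, IsColGraphAutGroup γ A

/-- The factor group `A_O / A_O^*` is an elementary abelian 2-group: for every `a ∈ A`,
the restriction of `a²` to `O` is the restriction of some element of `A` that fixes
every point outside `O`. -/
def FactorIsElem2 {X : Type*} (A : Subgroup (Equiv.Perm X)) (O : Set X) : Prop :=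
  ∀ a ∈ A, ∃ b ∈ A, (∀ z ∈ O, b z = a (a z)) ∧ ∀ z ∉ O, b z = z

/-!
The first claim holds for every automorphism group of a coloured graph: a permutation that agrees
with some automorphism on any two points preserves every colour.

For the second, let `O` be the orbit of `x`. An abelian group acting transitively on `O` acts
regularly on it, so the inversion `c x ↦ c⁻¹ x` is a well-defined involution of `O`; extend it by
the identity outside `O`. It preserves colours inside `O` because `c * d` maps `(c⁻¹ x, d⁻¹ x)` to
`(d x, c x)`, and between `O` and its complement because an element of `A` acting as `c²` on `O`
and trivially elsewhere maps `(c⁻¹ x, v)` to `(c x, v)`. Hence the inversion lies in `A`; it fixes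
`x`, hence all of `O`, so `a⁻¹ x = a x` and `a²` fixes `O`.
-/

section

open Equiv Function

variable {X : Type*} {A : Subgroup (Perm X)}

lemma mem_orbitOf_self (x : X) : x ∈ orbitOf (A : Set (Perm X)) x :=
  ⟨1, A.one_mem, rfl⟩

lemma apply_mem_orbitOf {a : Perm X} (ha : a ∈ A) (x : X) :
    a x ∈ orbitOf (A : Set (Perm X)) x :=
  ⟨a, ha, rfl⟩

lemma apply_eq_self_of_mem_orbitOf (hab : ∀ a ∈ A, ∀ b ∈ A, a * b = b * a) {c : Perm X}
    (hc : c ∈ A) {x : X} (hcx : c x = x) {y : X} (hy : y ∈ orbitOf (A : Set (Perm X)) x) :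
    c y = y := by
  obtain ⟨e, he, rfl⟩ := hy
  rw [← Perm.mul_apply, hab c hc e he, Perm.mul_apply, hcx]

lemma inv_apply_eq_of_apply_eq (hab : ∀ a ∈ A, ∀ b ∈ A, a * b = b * a) {c d : Perm X}
    (hc : c ∈ A) (hd : d ∈ A) {x : X} (h : c x = d x) : c⁻¹ x = d⁻¹ x := by
  have hfix : (c⁻¹ * d) x = x := by simp [← h]
  have := apply_eq_self_of_mem_orbitOf hab (mul_mem (inv_mem hc) hd) hfix
    (apply_mem_orbitOf (inv_mem hd) x)
  simpa using this

open Classical in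
/-- The map `c x ↦ c⁻¹ x` on the orbit of `x`, extended by the identity; well defined when
`A` is abelian (`orbitInversion_apply`). -/
noncomputable def orbitInversion (A : Subgroup (Perm X)) (x z : X) : X :=
  if h : z ∈ orbitOf (A : Set (Perm X)) x then h.choose⁻¹ x else z

lemma orbitInversion_apply (hab : ∀ a ∈ A, ∀ b ∈ A, a * b = b * a) {c : Perm X} (hc : c ∈ A)
    (x : X) : orbitInversion A x (c x) = c⁻¹ x := by
  have h := apply_mem_orbitOf hc x
  rw [orbitInversion, dif_pos h]
  exact inv_apply_eq_of_apply_eq hab h.choose_spec.1 hc h.choose_spec.2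

lemma orbitInversion_of_notMem {x z : X} (hz : z ∉ orbitOf (A : Set (Perm X)) x) :
    orbitInversion A x z = z :=
  dif_neg hz

lemma orbitInversion_involutive (hab : ∀ a ∈ A, ∀ b ∈ A, a * b = b * a) (x : X) :
    Involutive (orbitInversion A x) := by
  intro z
  by_cases hz : z ∈ orbitOf (A : Set (Perm X)) x
  · obtain ⟨c, hc, rfl⟩ := hz
    rw [orbitInversion_apply hab hc, orbitInversion_apply hab (inv_mem hc), inv_inv]
  · rw [orbitInversion_of_notMem hz, orbitInversion_of_notMem hz]

namespace IsColGraphAutGroup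

variable {k : ℕ} {γ : Sym2 X → Fin k}

lemma color_apply (hγ : IsColGraphAutGroup γ A) {a : Perm X} (ha : a ∈ A) {u v : X}
    (huv : u ≠ v) : γ s(a u, a v) = γ s(u, v) :=
  (hγ a).mp ha u v huv

theorem twoOrbitClosed (hγ : IsColGraphAutGroup γ A) : TwoOrbitClosed A := by
  intro σ hσ
  refine (hγ σ).mpr fun u v huv => ?_
  obtain ⟨a, ha, hσa⟩ := hσ u v
  rw [hσa u (Or.inl (mem_orbitOf_self u)), hσa v (Or.inr (mem_orbitOf_self v))]
  exact hγ.color_apply ha huv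

lemma color_inv_apply (hab : ∀ a ∈ A, ∀ b ∈ A, a * b = b * a) (hγ : IsColGraphAutGroup γ A)
    {c d : Perm X} (hc : c ∈ A) (hd : d ∈ A) {x : X} (h : c x ≠ d x) :
    γ s(c⁻¹ x, d⁻¹ x) = γ s(c x, d x) := by
  have hne : c⁻¹ x ≠ d⁻¹ x := fun h' => h (by
    simpa using inv_apply_eq_of_apply_eq hab (inv_mem hc) (inv_mem hd) h')
  have e₁ : (c * d) (c⁻¹ x) = d x := by simp [hab c hc d hd]
  have e₂ : (c * d) (d⁻¹ x) = c x := by simp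
  rw [← hγ.color_apply (mul_mem hc hd) hne, e₁, e₂, Sym2.eq_swap]

lemma color_inv_apply_of_notMem (hγ : IsColGraphAutGroup γ A) {x : X}
    (hfac : FactorIsElem2 A (orbitOf (A : Set (Perm X)) x)) {c : Perm X} (hc : c ∈ A) {v : X}
    (hv : v ∉ orbitOf (A : Set (Perm X)) x) : γ s(c⁻¹ x, v) = γ s(c x, v) := by
  obtain ⟨b, hb, hbO, hbout⟩ := hfac c hc
  have hmem := apply_mem_orbitOf (inv_mem hc) x
  have hne : c⁻¹ x ≠ v := fun h => hv (h ▸ hmem)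
  have hbc : b (c⁻¹ x) = c x := by
    rw [hbO _ hmem, Perm.coe_inv, apply_symm_apply]
  rw [← hγ.color_apply hb hne, hbc, hbout v hv]

lemma color_orbitInversion (hab : ∀ a ∈ A, ∀ b ∈ A, a * b = b * a)
    (hγ : IsColGraphAutGroup γ A) {x : X}
    (hfac : FactorIsElem2 A (orbitOf (A : Set (Perm X)) x)) {u v : X} (huv : u ≠ v) :
    γ s(orbitInversion A x u, orbitInversion A x v) = γ s(u, v) := by
  by_cases hu : u ∈ orbitOf (A : Set (Perm X)) x <;>
    by_cases hv : v ∈ orbitOf (A : Set (Perm X)) x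
  · obtain ⟨c, hc, rfl⟩ := hu
    obtain ⟨d, hd, rfl⟩ := hv
    rw [orbitInversion_apply hab hc, orbitInversion_apply hab hd]
    exact hγ.color_inv_apply hab hc hd huv
  · obtain ⟨c, hc, rfl⟩ := hu
    rw [orbitInversion_apply hab hc, orbitInversion_of_notMem hv]
    exact hγ.color_inv_apply_of_notMem hfac hc hv
  · obtain ⟨d, hd, rfl⟩ := hv
    rw [orbitInversion_apply hab hd, orbitInversion_of_notMem hu, Sym2.eq_swap,
      Sym2.eq_swap (a := u)]
    exact hγ.color_inv_apply_of_notMem hfac hd hu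
  · rw [orbitInversion_of_notMem hu, orbitInversion_of_notMem hv]

theorem apply_apply_eq_self_of_factorIsElem2 (hab : ∀ a ∈ A, ∀ b ∈ A, a * b = b * a)
    (hγ : IsColGraphAutGroup γ A) {x : X}
    (hfac : FactorIsElem2 A (orbitOf (A : Set (Perm X)) x)) {a : Perm X} (ha : a ∈ A) {z : X}
    (hz : z ∈ orbitOf (A : Set (Perm X)) x) : a (a z) = z := by
  set ι := (orbitInversion_involutive hab x).toPerm
  have hι : ι ∈ A := (hγ ι).mpr fun u v huv => hγ.color_orbitInversion hab hfac huv
  have hιx : ι x = x := by simpa [ι] using orbitInversion_apply hab A.one_mem x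
  have hinv : a⁻¹ x = a x := (orbitInversion_apply hab ha x).symm.trans
    (apply_eq_self_of_mem_orbitOf hab hι hιx (apply_mem_orbitOf ha x))
  have hsq : (a * a) x = x := by rw [Perm.mul_apply, ← hinv, Perm.coe_inv, apply_symm_apply]
  simpa using apply_eq_self_of_mem_orbitOf hab (mul_mem ha ha) hsq hz

end IsColGraphAutGroup

end

theorem statement4_general (X : Type*) (A : Subgroup (Equiv.Perm X))
    (hab : ∀ a ∈ A, ∀ b ∈ A, a * b = b * a) (hGR : InGR A) :
    TwoOrbitClosed A ∧
      ∀ x : X, FactorIsElem2 A (orbitOf (A : Set (Equiv.Perm X)) x) →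
        ∀ a ∈ A, ∀ z ∈ orbitOf (A : Set (Equiv.Perm X)) x, a (a z) = z := by
  obtain ⟨k, -, γ, hγ⟩ := hGR
  exact ⟨hγ.twoOrbitClosed, fun _ hfac _ ha _ hz =>
    hγ.apply_apply_eq_self_of_factorIsElem2 hab hfac ha hz⟩

/-- If an abelian subgroup `A ≤ Sym(X)` is the automorphism group of a coloured graph,
then `A` is 2-orbit-closed and, for every orbit `O` of `A`, if `A_O / A_O^*` is an
elementary abelian 2-group then so is `A_O`. -/
theorem statement4 (X : Type*) [Fintype X] (A : Subgroup (Equiv.Perm X))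
    (hab : ∀ a ∈ A, ∀ b ∈ A, a * b = b * a) (hGR : InGR A) :
    TwoOrbitClosed A ∧
      ∀ x : X, FactorIsElem2 A (orbitOf (A : Set (Equiv.Perm X)) x) →
        ∀ a ∈ A, ∀ z ∈ orbitOf (A : Set (Equiv.Perm X)) x, a (a z) = z :=
  statement4_general X A hab hGR
end

section
/- Let X be the disjoint union of two copies of (ℤ/3ℤ)², and let A ≤ Sym(X) be the group of all permutations σ_{a,b,c} with a, b, c ∈ ℤ/3ℤ, where σ_{a,b,c} acts on the first copy by translation by (a,b) and on the second copy by translation by (c,b). (A is the subdirect sum Z₃²[H] ⊕_φ Z₃²[H] with H ≅ Z₃.) Then A is the automorphism group of a 4-coloured graph on X (A ∈ GR(4)). -/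
/-- The subdirect sum `Z₃²[H] ⊕_φ Z₃²[H]` with `H ≅ Z₃`: the group of permutations
`σ_{a,b,c}` of the disjoint union of two copies of `(ℤ/3ℤ)²`, acting by translation by
`(a,b)` on the first copy and by translation by `(c,b)` on the second copy. -/
def subdirectSum33 : Subgroup (Equiv.Perm ((ZMod 3 × ZMod 3) ⊕ (ZMod 3 × ZMod 3))) where
  carrier := {σ | ∃ a b c : ZMod 3,
    σ = Equiv.sumCongr (Equiv.addRight (a, b)) (Equiv.addRight (c, b))}
  one_mem' := ⟨0, 0, 0, by ext z; cases z <;> simp⟩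
  mul_mem' := by
    rintro σ τ ⟨a, b, c, rfl⟩ ⟨a', b', c', rfl⟩
    exact ⟨a' + a, b' + b, c' + c, by ext z; cases z <;> simp [add_assoc, Prod.ext_iff]⟩
  inv_mem' := by
    rintro σ ⟨a, b, c, rfl⟩
    exact ⟨-a, -b, -c, by ext z; cases z <;> simp [Prod.ext_iff]⟩

-- auxiliary definitions and lemmas

abbrev V18 := (ZMod 3 × ZMod 3) ⊕ (ZMod 3 × ZMod 3)

def w1 (d : ZMod 3 × ZMod 3) : Fin 4 :=
  if d.2 = 0 then 0 else if d.1 = 0 then 1 else if d.1 = d.2 then 2 else 3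
def w2 (d : ZMod 3 × ZMod 3) : Fin 4 :=
  if d.2 = 0 then 1 else if d.1 = 0 then 0 else if d.1 = d.2 then 3 else 2
def fc (t : ZMod 3) : Fin 4 := if t = 0 then 1 else if t = 1 then 2 else 3

def col : V18 → V18 → Fin 4
  | .inl x, .inl x' => w1 (x' - x)
  | .inr y, .inr y' => w2 (y' - y)
  | .inl x, .inr y => fc (x.2 - y.2)
  | .inr y, .inl x => fc (x.2 - y.2)

lemma col_symm : ∀ z w : V18, col z w = col w z := by decide

def γ18 : Sym2 V18 → Fin 4 := Sym2.lift ⟨col, col_symm⟩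

def n₁ (z w : V18) : ℕ :=
  (Finset.univ.filter (fun u => u ≠ z ∧ u ≠ w ∧ col z u = 1 ∧ col w u = 1)).card

lemma detL : ∀ z w : V18, col z w = 0 → n₁ z w = 3 → z.isLeft ∧ w.isLeft := by decide
lemma detR : ∀ z w : V18, col z w = 1 → n₁ z w = 4 → z.isRight ∧ w.isRight := by decide
lemma factRowL : ∀ x : ZMod 3 × ZMod 3, (Sum.inl x : V18) ≠ .inl (x + (1,0)) ∧
    col (.inl x) (.inl (x + (1,0))) = 0 ∧ n₁ (.inl x) (.inl (x + (1,0))) = 3 := by decide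
lemma factRowR : ∀ y : ZMod 3 × ZMod 3, (Sum.inr y : V18) ≠ .inr (y + (1,0)) ∧
    col (.inr y) (.inr (y + (1,0))) = 1 ∧ n₁ (.inr y) (.inr (y + (1,0))) = 4 := by decide
lemma factCross : ∀ p q r s : ZMod 3, fc (p - q) = fc (r - s) → p - q = r - s := by decide
lemma factD2a : ∀ d : ZMod 3 × ZMod 3, d ≠ 0 → d.1 = 0 → w1 d = 1 := by decide
lemma factD2b : ∀ d : ZMod 3 × ZMod 3, d ≠ 0 → w1 d = 1 → d.1 = 0 := by decide
lemma factD3 : ∀ d : ZMod 3 × ZMod 3, w1 d = 2 → d.2 = 1 → d.1 = 1 := by decide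
lemma factE2a : ∀ d : ZMod 3 × ZMod 3, d ≠ 0 → d.1 = 0 → w2 d = 0 := by decide
lemma factE2b : ∀ d : ZMod 3 × ZMod 3, d ≠ 0 → w2 d = 0 → d.1 = 0 := by decide
lemma factE3 : ∀ d : ZMod 3 × ZMod 3, w2 d = 3 → d.2 = 1 → d.1 = 1 := by decide
lemma factNe11 : ∀ x : ZMod 3 × ZMod 3, x ≠ x + (1,1) := by decide
lemma factW1d : w1 ((1 : ZMod 3), (1 : ZMod 3)) = 2 := by decide
lemma factW2d : w2 ((1 : ZMod 3), (1 : ZMod 3)) = 3 := by decide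
lemma htri : ∀ t : ZMod 3, t = 0 ∨ t = 1 ∨ t = 2 := by decide

/-- The subdirect sum `Z₃²[Z₃] ⊕_φ Z₃²[Z₃]` is the automorphism group of a
4-coloured graph on the disjoint union of two copies of `(ℤ/3ℤ)²`. -/
theorem statement18 : InGR4 subdirectSum33 := by
  refine ⟨γ18, fun σ => ?_⟩
  constructor
  · rintro ⟨a, b, c, rfl⟩ x y hxy
    cases x with
    | inl u =>
      cases y with
      | inl v => show w1 ((v + (a,b)) - (u + (a,b))) = w1 (v - u); congr 1; ring
      | inr v => show fc ((u + (a,b)).2 - (v + (c,b)).2) = fc (u.2 - v.2); congr 1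
                 show (u.2 + b) - (v.2 + b) = u.2 - v.2; ring
    | inr u =>
      cases y with
      | inl v => show fc ((v + (a,b)).2 - (u + (c,b)).2) = fc (v.2 - u.2); congr 1
                 show (v.2 + b) - (u.2 + b) = v.2 - u.2; ring
      | inr v => show w2 ((v + (c,b)) - (u + (c,b))) = w2 (v - u); congr 1; ring
  · intro hσ
    have hc : ∀ z w : V18, z ≠ w → col (σ z) (σ w) = col z w := hσ
    -- preservation of n₁
    have hn : ∀ z w : V18, z ≠ w → n₁ (σ z) (σ w) = n₁ z w := by
      intro z w hzw
      unfold n₁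
      symm
      apply Finset.card_bij (fun u _ => σ u)
      · intro u hu
        simp only [Finset.mem_filter, Finset.mem_univ, true_and] at hu ⊢
        obtain ⟨h1, h2, h3, h4⟩ := hu
        exact ⟨fun h => h1 (σ.injective h), fun h => h2 (σ.injective h),
          by rw [hc z u fun h => h1 h.symm]; exact h3,
          by rw [hc w u fun h => h2 h.symm]; exact h4⟩
      · intro a ha b hb h; exact σ.injective h
      · intro u hu
        simp only [Finset.mem_filter, Finset.mem_univ, true_and] at hu
        obtain ⟨h1, h2, h3, h4⟩ := hu
        refine ⟨σ.symm u, ?_, σ.apply_symm_apply u⟩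
        simp only [Finset.mem_filter, Finset.mem_univ, true_and]
        have e : σ (σ.symm u) = u := σ.apply_symm_apply u
        refine ⟨fun h => h1 (by rw [← e, h]), fun h => h2 (by rw [← e, h]), ?_, ?_⟩
        · have := hc z (σ.symm u) fun h => h1 (by rw [← e, ← h])
          rw [e] at this; rw [← this]; exact h3
        · have := hc w (σ.symm u) fun h => h2 (by rw [← e, ← h])
          rw [e] at this; rw [← this]; exact h4
    -- copy preservation
    have hL : ∀ x, ∃ x', σ (.inl x) = .inl x' := by
      intro x
      obtain ⟨hne, hcol, hcnt⟩ := factRowL x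
      have h0 : col (σ (.inl x)) (σ (.inl (x + (1,0)))) = 0 := by rw [hc _ _ hne]; exact hcol
      have h3 : n₁ (σ (.inl x)) (σ (.inl (x + (1,0)))) = 3 := by rw [hn _ _ hne]; exact hcnt
      exact Sum.isLeft_iff.mp (detL _ _ h0 h3).1
    have hR : ∀ y, ∃ y', σ (.inr y) = .inr y' := by
      intro y
      obtain ⟨hne, hcol, hcnt⟩ := factRowR y
      have h0 : col (σ (.inr y)) (σ (.inr (y + (1,0)))) = 1 := by rw [hc _ _ hne]; exact hcol
      have h3 : n₁ (σ (.inr y)) (σ (.inr (y + (1,0)))) = 4 := by rw [hn _ _ hne]; exact hcnt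
      exact Sum.isRight_iff.mp (detR _ _ h0 h3).1
    choose F hF using hL
    choose G hG using hR
    have hFinj : Function.Injective F := by
      intro x x' h
      have : σ (.inl x) = σ (.inl x') := by rw [hF, hF, h]
      exact Sum.inl.inj (σ.injective this)
    have hGinj : Function.Injective G := by
      intro y y' h
      have : σ (.inr y) = σ (.inr y') := by rw [hG, hG, h]
      exact Sum.inr.inj (σ.injective this)
    -- second coordinates
    have hcross : ∀ x y : ZMod 3 × ZMod 3, (F x).2 - (G y).2 = x.2 - y.2 := by
      intro x y
      have h := hc (.inl x) (.inr y) (by simp)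
      rw [hF, hG] at h
      exact factCross _ _ _ _ h
    have hG2 : ∀ y, (G y).2 = y.2 + (F (0,0)).2 := by
      intro y
      have h : (F (0,0)).2 - (G y).2 = 0 - y.2 := hcross (0,0) y
      linear_combination -h
    have hF2 : ∀ x, (F x).2 = x.2 + (F (0,0)).2 := by
      intro x
      have h := hcross x (0,0)
      have h2 := hG2 (0,0)
      linear_combination h + h2
    -- first coordinates, copy 1
    have hFcol : ∀ t s : ZMod 3, (F (t, s)).1 = (F (t, 0)).1 := by
      intro t s
      by_cases h : s = 0
      · rw [h]
      · have hne : ((t, 0) : ZMod 3 × ZMod 3) ≠ (t, s) := by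
          intro hh; exact h (congrArg Prod.snd hh).symm
        have hinl : (Sum.inl ((t,0) : ZMod 3 × ZMod 3) : V18) ≠ .inl (t, s) := by
          intro hh; exact hne (Sum.inl.inj hh)
        have hcc := hc _ _ hinl
        rw [hF, hF] at hcc
        have hds : ((t, s) - (t, 0) : ZMod 3 × ZMod 3) ≠ 0 := by
          intro hh
          apply hne
          have := sub_eq_zero.mp hh
          exact this.symm
        have hx : w1 ((t, s) - (t, 0)) = 1 := factD2a _ hds (by show t - t = 0; ring)
        have hdF : F (t, s) - F (t, 0) ≠ 0 := by
          intro hh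
          exact hne (hFinj (sub_eq_zero.mp hh)).symm
        have := factD2b _ hdF (hcc.trans hx)
        have h1 : (F (t, s)).1 - (F (t, 0)).1 = 0 := this
        linear_combination h1
    have hFdiag : ∀ x : ZMod 3 × ZMod 3, (F (x + (1,1))).1 = (F x).1 + 1 := by
      intro x
      have hne : (Sum.inl x : V18) ≠ .inl (x + (1,1)) := by
        intro hh; exact factNe11 x (Sum.inl.inj hh)
      have hcc := hc _ _ hne
      rw [hF, hF] at hcc
      have hx : w1 (x + (1,1) - x) = 2 := by rw [add_sub_cancel_left]; exact factW1d
      have hsnd : (F (x + (1,1)) - F x).2 = 1 := by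
        show (F (x + (1,1))).2 - (F x).2 = 1
        rw [hF2 (x + (1,1)), hF2 x]
        show (x.2 + 1 + (F (0,0)).2) - (x.2 + (F (0,0)).2) = 1
        ring
      have := factD3 _ (hcc.trans hx) hsnd
      have h1 : (F (x + (1,1))).1 - (F x).1 = 1 := this
      linear_combination h1
    have hFstep : ∀ t : ZMod 3, (F (t + 1, 0)).1 = (F (t, 0)).1 + 1 := by
      intro t
      have h := hFdiag (t, 0)
      have e : ((t, 0) + ((1 : ZMod 3), (1 : ZMod 3))) = (t + 1, 1) := by
        rw [Prod.ext_iff]; exact ⟨rfl, zero_add 1⟩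
      rw [e] at h
      rw [hFcol (t + 1) 1] at h
      exact h
    have hF1 : ∀ x : ZMod 3 × ZMod 3, (F x).1 = x.1 + (F (0,0)).1 := by
      intro x
      have h0 := hFstep 0
      have h1 := hFstep 1
      rw [zero_add] at h0
      rw [show ((1 : ZMod 3) + 1) = 2 by decide] at h1
      have hx : (F x).1 = (F (x.1, 0)).1 := hFcol x.1 x.2
      rcases htri x.1 with h | h | h <;> rw [hx, h]
      · exact (zero_add _).symm
      · rw [h0]; ring
      · rw [h1, h0]; ring
    -- first coordinates, copy 2
    have hGcol : ∀ t s : ZMod 3, (G (t, s)).1 = (G (t, 0)).1 := by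
      intro t s
      by_cases h : s = 0
      · rw [h]
      · have hne : ((t, 0) : ZMod 3 × ZMod 3) ≠ (t, s) := by
          intro hh; exact h (congrArg Prod.snd hh).symm
        have hinr : (Sum.inr ((t,0) : ZMod 3 × ZMod 3) : V18) ≠ .inr (t, s) := by
          intro hh; exact hne (Sum.inr.inj hh)
        have hcc := hc _ _ hinr
        rw [hG, hG] at hcc
        have hds : ((t, s) - (t, 0) : ZMod 3 × ZMod 3) ≠ 0 := by
          intro hh
          exact hne (sub_eq_zero.mp hh).symm
        have hx : w2 ((t, s) - (t, 0)) = 0 := factE2a _ hds (by show t - t = 0; ring)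
        have hdG : G (t, s) - G (t, 0) ≠ 0 := by
          intro hh
          exact hne (hGinj (sub_eq_zero.mp hh)).symm
        have := factE2b _ hdG (hcc.trans hx)
        have h1 : (G (t, s)).1 - (G (t, 0)).1 = 0 := this
        linear_combination h1
    have hGdiag : ∀ y : ZMod 3 × ZMod 3, (G (y + (1,1))).1 = (G y).1 + 1 := by
      intro y
      have hne : (Sum.inr y : V18) ≠ .inr (y + (1,1)) := by
        intro hh; exact factNe11 y (Sum.inr.inj hh)
      have hcc := hc _ _ hne
      rw [hG, hG] at hcc
      have hx : w2 (y + (1,1) - y) = 3 := by rw [add_sub_cancel_left]; exact factW2d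
      have hsnd : (G (y + (1,1)) - G y).2 = 1 := by
        show (G (y + (1,1))).2 - (G y).2 = 1
        rw [hG2 (y + (1,1)), hG2 y]
        show (y.2 + 1 + (F (0,0)).2) - (y.2 + (F (0,0)).2) = 1
        ring
      have := factE3 _ (hcc.trans hx) hsnd
      have h1 : (G (y + (1,1))).1 - (G y).1 = 1 := this
      linear_combination h1
    have hGstep : ∀ t : ZMod 3, (G (t + 1, 0)).1 = (G (t, 0)).1 + 1 := by
      intro t
      have h := hGdiag (t, 0)
      have e : ((t, 0) + ((1 : ZMod 3), (1 : ZMod 3))) = (t + 1, 1) := by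
        rw [Prod.ext_iff]; exact ⟨rfl, zero_add 1⟩
      rw [e] at h
      rw [hGcol (t + 1) 1] at h
      exact h
    have hG1 : ∀ y : ZMod 3 × ZMod 3, (G y).1 = y.1 + (G (0,0)).1 := by
      intro y
      have h0 := hGstep 0
      have h1 := hGstep 1
      rw [zero_add] at h0
      rw [show ((1 : ZMod 3) + 1) = 2 by decide] at h1
      have hy : (G y).1 = (G (y.1, 0)).1 := hGcol y.1 y.2
      rcases htri y.1 with h | h | h <;> rw [hy, h]
      · exact (zero_add _).symm
      · rw [h0]; ring
      · rw [h1, h0]; ring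
    -- conclude
    refine ⟨(F (0,0)).1, (F (0,0)).2, (G (0,0)).1, ?_⟩
    ext z
    cases z with
    | inl x =>
      rw [hF]
      show _ = Sum.inl (x + ((F (0,0)).1, (F (0,0)).2))
      congr 1
      rw [Prod.ext_iff]
      refine ⟨?_, ?_⟩
      · rw [hF1]; rfl
      · rw [hF2]; rfl
    | inr y =>
      rw [hG]
      show _ = Sum.inr (y + ((G (0,0)).1, (F (0,0)).2))
      congr 1
      rw [Prod.ext_iff]
      refine ⟨?_, ?_⟩
      · rw [hG1]; rfl
      · rw [hG2]; rfl
end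

section
/- Let X be the disjoint union of two copies of (ℤ/3ℤ)², and let A ≤ Sym(X) be the group of all permutations σ_g with g ∈ (ℤ/3ℤ)², where σ_g acts on both copies simultaneously by translation by g (A is the parallel sum 2≈Z₃²). Then A is the automorphism group of a 4-coloured graph on X (A ∈ GR(4)). -/
/-- The parallel sum `2≈Z₃²`: the group of permutations `σ_g` of the disjoint union of
two copies of `(ℤ/3ℤ)²`, acting by translation by `g` simultaneously on both copies. -/
def parallelSum33 : Subgroup (Equiv.Perm ((ZMod 3 × ZMod 3) ⊕ (ZMod 3 × ZMod 3))) where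
  carrier := {σ | ∃ g : ZMod 3 × ZMod 3,
    σ = Equiv.sumCongr (Equiv.addRight g) (Equiv.addRight g)}
  one_mem' := ⟨0, by ext z; cases z <;> simp⟩
  mul_mem' := by
    rintro σ τ ⟨g, rfl⟩ ⟨h, rfl⟩
    exact ⟨h + g, by ext z; cases z <;> simp [add_assoc]⟩
  inv_mem' := by
    rintro σ ⟨g, rfl⟩
    exact ⟨-g, by ext z; cases z <;> simp⟩

/-! ### Auxiliary construction: an explicit 4-coloured graph

We colour the pairs of `X = (ℤ/3)² ⊕ (ℤ/3)²` as follows: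
* pairs inside the first copy get colour `0`;
* pairs `{b, b'}` inside the second copy get colour `1` if `b - b' ∈ {±e₁}`,
  colour `2` if `b - b' ∈ {±e₂}`, and colour `3` otherwise;
* cross pairs `{a, b}` (`a` in the first copy, `b` in the second) get colour `1`
  if `b - a = 0`, colour `2` if `b - a ∈ {e₁, e₂}`, and colour `3` otherwise. -/

abbrev G3 := ZMod 3 × ZMod 3
abbrev X3 := G3 ⊕ G3

/-- Colour of a cross pair, as a function of the difference. -/
def fcol (d : G3) : Fin 4 :=
  if d = 0 then 1 else if d = (1,0) ∨ d = (0,1) then 2 else 3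

/-- Colour of a pair inside the second copy, as a function of the difference. -/
def ccol (d : G3) : Fin 4 :=
  if d = (1,0) ∨ d = (2,0) then 1 else if d = (0,1) ∨ d = (0,2) then 2 else 3

/-- The 4-colouring, as a symmetric function of ordered pairs. -/
def gam0 : X3 → X3 → Fin 4
  | .inl _, .inl _ => 0
  | .inr b, .inr b' => ccol (b - b')
  | .inl a, .inr b => fcol (b - a)
  | .inr b, .inl a => fcol (b - a)

lemma ccol_symm : ∀ d d' : G3, ccol (d - d') = ccol (d' - d) := by decide

lemma gam0_symm : ∀ x y : X3, gam0 x y = gam0 y x := by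
  rintro (a|a) (b|b) <;> simp [gam0, ccol_symm]

/-- The 4-coloured graph on `X3`. -/
def gam : Sym2 X3 → Fin 4 := Sym2.lift ⟨gam0, gam0_symm⟩

@[simp] lemma gam_mk (x y : X3) : gam s(x, y) = gam0 x y := Sym2.lift_mk _ _ _

/-- Colour `0` occurs only on pairs inside the first copy. -/
lemma gam0_eq_zero : ∀ x y : X3, gam0 x y = 0 → ∃ a b : G3, x = .inl a ∧ y = .inl b := by
  have hf : ∀ d : G3, fcol d ≠ 0 := by decide
  have hc : ∀ d : G3, ccol d ≠ 0 := by decide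
  rintro (a|a) (b|b) hh <;> simp [gam0] at hh ⊢ <;> first
    | exact (hf _ hh).elim | exact (hc _ hh).elim

/-- Rigidity: any self-map of `(ℤ/3)²` whose difference pattern preserves both `fcol`
and `ccol` is a translation. -/
lemma keylem (α : G3 → G3)
    (hf : ∀ a b : G3, fcol (α b - α a) = fcol (b - a))
    (hc : ∀ a b : G3, a ≠ b → ccol (α a - α b) = ccol (a - b)) :
    ∀ x : G3, α x = x + α 0 := by
  set g := α 0 with hg
  have step : ∀ (x a₁ a₂ c₁ c₂ : G3), α a₁ = c₁ + g → α a₂ = c₂ + g →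
      (∀ d : G3, fcol (d - c₁) = fcol (x - a₁) → fcol (d - c₂) = fcol (x - a₂) → d = x) →
      α x = x + g := by
    intro x a₁ a₂ c₁ c₂ h₁ h₂ hdec
    have hd : α x = (α x - g) + g := (sub_add_cancel _ _).symm
    have A := hf a₁ x
    have B := hf a₂ x
    rw [h₁, hd, add_sub_add_right_eq_sub] at A
    rw [h₂, hd, add_sub_add_right_eq_sub] at B
    rw [hd, hdec _ A B]
  have stepc : ∀ (x a₁ c₁ : G3), x ≠ 0 → α a₁ = c₁ + g →
      (∀ d : G3, fcol (d - c₁) = fcol (x - a₁) → ccol d = ccol x → d = x) →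
      α x = x + g := by
    intro x a₁ c₁ hx h₁ hdec
    have hd : α x = (α x - g) + g := (sub_add_cancel _ _).symm
    have A := hf a₁ x
    have B := hc x 0 hx
    rw [h₁, hd, add_sub_add_right_eq_sub] at A
    rw [← hg, hd, add_sub_cancel_right, sub_zero] at B
    rw [hd, hdec _ A B]
  have h00 : α 0 = 0 + g := by rw [zero_add]
  have h10 : α (1,0) = (1,0) + g := stepc (1,0) 0 0 (by decide) h00 (by decide)
  have h01 : α (0,1) = (0,1) + g := stepc (0,1) 0 0 (by decide) h00 (by decide)
  have h11 : α (1,1) = (1,1) + g := step (1,1) (1,0) (0,1) (1,0) (0,1) h10 h01 (by decide)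
  have h20 : α (2,0) = (2,0) + g := stepc (2,0) (1,0) (1,0) (by decide) h10 (by decide)
  have h02 : α (0,2) = (0,2) + g := stepc (0,2) (0,1) (0,1) (by decide) h01 (by decide)
  have h21 : α (2,1) = (2,1) + g := step (2,1) (2,0) (1,1) (2,0) (1,1) h20 h11 (by decide)
  have h12 : α (1,2) = (1,2) + g := step (1,2) (0,2) (1,1) (0,2) (1,1) h02 h11 (by decide)
  have h22 : α (2,2) = (2,2) + g := step (2,2) (2,1) (1,2) (2,1) (1,2) h21 h12 (by decide)
  have hlist : ∀ x : G3, x = 0 ∨ x = (1,0) ∨ x = (0,1) ∨ x = (1,1) ∨ x = (2,0) ∨ x = (0,2)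
      ∨ x = (2,1) ∨ x = (1,2) ∨ x = (2,2) := by decide
  intro x
  rcases hlist x with rfl|rfl|rfl|rfl|rfl|rfl|rfl|rfl|rfl <;> first | exact h00 | assumption

/-- The parallel sum `2≈Z₃²` is the automorphism group of a 4-coloured graph on the
disjoint union of two copies of `(ℤ/3ℤ)²`. -/
theorem statement19 : InGR4 parallelSum33 := by
  refine ⟨gam, fun σ => ⟨?_, ?_⟩⟩
  · rintro ⟨g, rfl⟩ x y hxy
    rcases x with a|a <;> rcases y with b|b <;>
      simp [gam0, add_sub_add_right_eq_sub]
  · intro h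
    have hL : ∀ a : G3, ∃ a', σ (.inl a) = .inl a' := by
      intro a
      have hne : (Sum.inl a : X3) ≠ .inl (a + (1,0)) := by
        simp only [ne_eq, Sum.inl.injEq]
        intro hco
        exact absurd (left_eq_add.mp hco) (by decide)
      have h0 := h _ _ hne
      have hz : gam0 (σ (.inl a)) (σ (.inl (a + (1,0)))) = 0 := by
        have : gam0 (Sum.inl a : X3) (.inl (a + (1,0))) = 0 := rfl
        simpa [this] using h0
      obtain ⟨a', b', hx, -⟩ := gam0_eq_zero _ _ hz
      exact ⟨a', hx⟩
    classical
    choose αf hα using hL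
    have hαinj : Function.Injective αf := by
      intro a b hab
      have : σ (.inl a) = σ (.inl b) := by rw [hα, hα, hab]
      exact Sum.inl.inj (σ.injective this)
    have hαsurj : Function.Surjective αf := Finite.surjective_of_injective hαinj
    have hR : ∀ b : G3, ∃ b', σ (.inr b) = .inr b' := by
      intro b
      rcases hσ : σ (.inr b) with c | c
      · obtain ⟨a, rfl⟩ := hαsurj c
        have : σ (.inl a) = σ (.inr b) := by rw [hα, hσ]
        exact absurd (σ.injective this) (by simp)
      · exact ⟨c, rfl⟩
    choose βf hβ using hR
    have hcross : ∀ a b : G3, fcol (βf b - αf a) = fcol (b - a) := by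
      intro a b
      have h0 := h (.inl a) (.inr b) (by simp)
      rw [hα, hβ] at h0
      simpa [gam0] using h0
    have hβα : ∀ a, βf a = αf a := by
      intro a
      have h1 : fcol (βf a - αf a) = 1 := by
        have := hcross a a
        rwa [sub_self, (by decide : fcol (0 : G3) = 1)] at this
      have hd : ∀ d : G3, fcol d = 1 → d = 0 := by decide
      exact sub_eq_zero.mp (hd _ h1)
    have hf' : ∀ a b : G3, fcol (αf b - αf a) = fcol (b - a) := by
      intro a b; rw [← hβα]; exact hcross a b
    have hc : ∀ a b : G3, a ≠ b → ccol (αf a - αf b) = ccol (a - b) := by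
      intro a b hab
      have h0 := h (.inr a) (.inr b) (by simp [hab])
      rw [hβ, hβ, hβα, hβα] at h0
      simpa [gam0] using h0
    have hkey := keylem αf hf' hc
    refine ⟨αf 0, ?_⟩
    ext z
    rcases z with a | a
    · rw [hα a, hkey a]; rfl
    · rw [hβ a, hβα a, hkey a]; rfl
end
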